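/- Let n ≥ 5 be an integer. There exist a constant C > 0 and ℓ₀ ≥ 1 such that for every real ℓ ≥ ℓ₀, | I_R(ℓ) − √(π/(n−2)) · ℓ^{1/2} | ≤ C·ℓ^{−1/2}. In particular, ℓ^{−1/2} · I_R(ℓ) → √(π/(n−2)) as ℓ → ∞, so I_R(ℓ) > 0 for all sufficiently large ℓ. -/

import Mathlib

/-!
Integrating by parts against `ℓ s e^{-(n-2)ℓs²} (1-s²)^{n/2}`, which vanishes at `s = ±1`,
removes the `ℓ²` term of the integrand, leaving
`e^{-(n-2)ℓs²} (1-s²)^{(n-2)/2} (n/2 + ℓ - (n+1)ℓs²)`.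
By Bernoulli's inequality `(1-s²)^{(n-2)/2} = 1 + O(s²)`, and against the Gaussian each factor `s²`
is worth `O(1/ℓ)`, so this integrand is `ℓ e^{-(n-2)ℓs²} + O(e^{-(n-2)ℓs²/2})`. Integrating gives
`I_R(ℓ) = ℓ √(π/((n-2)ℓ)) + O(ℓ^{-1/2})`; cutting the Gaussian integral off at `±1` costs only
`O(ℓ^{-3/2})`.
-/

open Real Filter

/-- Total scalar curvature integral `I_R(ℓ)` (up to the factor `2(n−1)ω_{n−1}`). -/
noncomputable def IR (n : ℕ) (ℓ : ℝ) : ℝ :=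
  ∫ s in (-1 : ℝ)..1,
    Real.exp (-((n : ℝ) - 2) * ℓ * s ^ 2) * (1 - s ^ 2) ^ (((n : ℝ) - 2) / 2) *
      ((n : ℝ) / 2 + 2 * ℓ - 2 * ((n : ℝ) + 1) * ℓ * s ^ 2
        + (4 - 2 * (n : ℝ)) * ℓ ^ 2 * s ^ 2 * (1 - s ^ 2))

open MeasureTheory
open scoped Nat Topology

theorem pow_mul_exp_neg_mul_sq_le (k : ℕ) {b : ℝ} (hb : 0 < b) (x : ℝ) :
    x ^ (2 * k) * exp (-b * x ^ 2) ≤ k ! * (2 / b) ^ k * exp (-(b / 2) * x ^ 2) := by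
  have hy : (b / 2 * x ^ 2) ^ k ≤ k ! * exp (b / 2 * x ^ 2) := by
    have := pow_div_factorial_le_exp _ (by positivity : 0 ≤ b / 2 * x ^ 2) k
    rw [div_le_iff₀ (by positivity)] at this
    linarith
  have hpow : x ^ (2 * k) = (2 / b) ^ k * (b / 2 * x ^ 2) ^ k := by
    rw [← mul_pow, pow_mul]; congr 1; field_simp
  have hexp : exp (-b * x ^ 2) = exp (-(b / 2 * x ^ 2)) * exp (-(b / 2) * x ^ 2) := by
    rw [← exp_add]; ring_nf
  calc x ^ (2 * k) * exp (-b * x ^ 2)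
      = (2 / b) ^ k * ((b / 2 * x ^ 2) ^ k * exp (-(b / 2 * x ^ 2))) *
          exp (-(b / 2) * x ^ 2) := by rw [hpow, hexp]; ring
    _ ≤ (2 / b) ^ k * (k ! * exp (b / 2 * x ^ 2) * exp (-(b / 2 * x ^ 2))) *
          exp (-(b / 2) * x ^ 2) := by gcongr
    _ = k ! * (2 / b) ^ k * exp (-(b / 2) * x ^ 2) := by
      rw [mul_assoc (k ! : ℝ), ← exp_add, add_neg_cancel, exp_zero]; ring

theorem exp_neg_mul_sq_mul_le {b c₀ c₁ c₂ : ℝ} (hb : 0 < b) (h₀ : 0 ≤ c₀) (h₁ : 0 ≤ c₁)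
    (h₂ : 0 ≤ c₂) (x : ℝ) :
    exp (-b * x ^ 2) * (c₀ + c₁ * x ^ 2 + c₂ * x ^ 4)
      ≤ (c₀ + 2 * c₁ / b + 8 * c₂ / b ^ 2) * exp (-(b / 2) * x ^ 2) := by
  have m₀ : exp (-b * x ^ 2) ≤ exp (-(b / 2) * x ^ 2) := by
    simpa using pow_mul_exp_neg_mul_sq_le 0 hb x
  have m₁ : x ^ 2 * exp (-b * x ^ 2) ≤ 2 / b * exp (-(b / 2) * x ^ 2) := by
    simpa using pow_mul_exp_neg_mul_sq_le 1 hb x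
  have m₂ : x ^ 4 * exp (-b * x ^ 2) ≤ 8 / b ^ 2 * exp (-(b / 2) * x ^ 2) := by
    convert pow_mul_exp_neg_mul_sq_le 2 hb x using 2
    norm_num
    ring
  calc exp (-b * x ^ 2) * (c₀ + c₁ * x ^ 2 + c₂ * x ^ 4)
      = c₀ * exp (-b * x ^ 2) + c₁ * (x ^ 2 * exp (-b * x ^ 2))
          + c₂ * (x ^ 4 * exp (-b * x ^ 2)) := by ring
    _ ≤ c₀ * exp (-(b / 2) * x ^ 2) + c₁ * (2 / b * exp (-(b / 2) * x ^ 2))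
          + c₂ * (8 / b ^ 2 * exp (-(b / 2) * x ^ 2)) := by gcongr
    _ = _ := by ring

theorem integral_exp_neg_mul_sq_le {b : ℝ} (hb : 0 < b) :
    ∫ s in (-1 : ℝ)..1, exp (-b * s ^ 2) ≤ √(π / b) := by
  rw [intervalIntegral.integral_of_le (by norm_num), ← integral_gaussian b]
  exact setIntegral_le_integral (integrable_exp_neg_mul_sq hb)
    (Eventually.of_forall fun x => (exp_pos _).le)

theorem sqrt_pi_div_sub_integral_exp_neg_mul_sq_le {b : ℝ} (hb : 0 < b) :
    √(π / b) - ∫ s in (-1 : ℝ)..1, exp (-b * s ^ 2) ≤ 2 / b * √(π / (b / 2)) := by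
  have hf : Integrable fun x : ℝ => exp (-b * x ^ 2) := integrable_exp_neg_mul_sq hb
  have htail : ∀ x : ℝ, exp (-b * x ^ 2) -
      (Set.Ioc (-1 : ℝ) 1).indicator (fun x => exp (-b * x ^ 2)) x
        ≤ x ^ 2 * exp (-b * x ^ 2) := by
    intro x
    by_cases hx : x ∈ Set.Ioc (-1 : ℝ) 1
    · rw [Set.indicator_of_mem hx, sub_self]; positivity
    · have hx1 : 1 ≤ x ^ 2 := by
        simp only [Set.mem_Ioc, not_and_or, not_lt, not_le] at hx
        rcases hx with h | h <;> nlinarith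
      rw [Set.indicator_of_notMem hx, sub_zero]
      nlinarith [exp_pos (-b * x ^ 2)]
  have hmono := integral_mono (hf.sub (hf.indicator measurableSet_Ioc))
    ((integrable_exp_neg_mul_sq (half_pos hb)).const_mul (2 / b))
    fun x => (htail x).trans (by simpa using pow_mul_exp_neg_mul_sq_le 1 hb x)
  simp only [Pi.sub_apply] at hmono
  rw [integral_sub hf (hf.indicator measurableSet_Ioc), integral_indicator measurableSet_Ioc,
    integral_const_mul, integral_gaussian, integral_gaussian] at hmono
  rw [intervalIntegral.integral_of_le (by norm_num)]
  simpa using hmono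

theorem abs_integral_exp_neg_mul_sq_sub_le {b : ℝ} (hb : 0 < b) :
    |(∫ s in (-1 : ℝ)..1, exp (-b * s ^ 2)) - √(π / b)| ≤ 2 / b * √(π / (b / 2)) := by
  rw [abs_sub_comm, abs_of_nonneg (sub_nonneg.2 (integral_exp_neg_mul_sq_le hb))]
  exact sqrt_pi_div_sub_integral_exp_neg_mul_sq_le hb

theorem continuous_one_sub_sq_rpow {p : ℝ} (hp : 0 ≤ p) :
    Continuous fun s : ℝ => (1 - s ^ 2) ^ p :=
  (continuous_const.sub (continuous_pow 2)).rpow_const fun _ => Or.inr hp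

noncomputable def boundaryTerm (d ℓ s : ℝ) : ℝ :=
  ℓ * s * exp (-(d - 2) * ℓ * s ^ 2) * (1 - s ^ 2) ^ ((d - 2) / 2 + 1)

noncomputable def reducedIntegrand (d ℓ s : ℝ) : ℝ :=
  exp (-(d - 2) * ℓ * s ^ 2) * (1 - s ^ 2) ^ ((d - 2) / 2) * (d / 2 + ℓ - (d + 1) * ℓ * s ^ 2)

theorem hasDerivAt_boundaryTerm {d ℓ s : ℝ} (hd : 2 ≤ d) (hs : s ^ 2 ≤ 1) :
    HasDerivAt (boundaryTerm d ℓ)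
      (exp (-(d - 2) * ℓ * s ^ 2) * (1 - s ^ 2) ^ ((d - 2) / 2) *
        (ℓ - (d + 1) * ℓ * s ^ 2 + (4 - 2 * d) * ℓ ^ 2 * s ^ 2 * (1 - s ^ 2))) s := by
  have hne : (d - 2) / 2 + 1 ≠ 0 := by linarith
  have hlin : HasDerivAt (fun t => ℓ * t) ℓ s := by simpa using (hasDerivAt_id s).const_mul ℓ
  have hgauss : HasDerivAt (fun t => exp (-(d - 2) * ℓ * t ^ 2))
      (exp (-(d - 2) * ℓ * s ^ 2) * (-(d - 2) * ℓ * (2 * s))) s := by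
    simpa using ((hasDerivAt_pow 2 s).const_mul (-(d - 2) * ℓ)).exp
  have hpow : HasDerivAt (fun t => (1 - t ^ 2) ^ ((d - 2) / 2 + 1))
      (-(2 * s) * ((d - 2) / 2 + 1) * (1 - s ^ 2) ^ ((d - 2) / 2)) s := by
    simpa using ((hasDerivAt_pow 2 s).const_sub 1).rpow_const (p := (d - 2) / 2 + 1)
      (Or.inr (by linarith))
  refine ((hlin.fun_mul hgauss).fun_mul hpow).congr_deriv ?_
  rw [rpow_add_one' (by linarith) hne]
  ring

theorem IR_eq_integral_reducedIntegrand {n : ℕ} (hn : 2 ≤ n) (ℓ : ℝ) :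
    IR n ℓ = ∫ s in (-1 : ℝ)..1, reducedIntegrand n ℓ s := by
  have hd : (2 : ℝ) ≤ n := by exact_mod_cast hn
  have hR := continuous_one_sub_sq_rpow (p := ((n : ℝ) - 2) / 2) (by linarith)
  have hboundary : ∫ s in (-1 : ℝ)..1, exp (-((n : ℝ) - 2) * ℓ * s ^ 2) *
      (1 - s ^ 2) ^ (((n : ℝ) - 2) / 2) *
      (ℓ - ((n : ℝ) + 1) * ℓ * s ^ 2 + (4 - 2 * (n : ℝ)) * ℓ ^ 2 * s ^ 2 * (1 - s ^ 2)) = 0 := by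
    rw [intervalIntegral.integral_eq_sub_of_hasDerivAt (fun s hs => hasDerivAt_boundaryTerm hd ?_)
      (Continuous.intervalIntegrable (by fun_prop) _ _)]
    · simp [boundaryTerm, zero_rpow (show ((n : ℝ) - 2) / 2 + 1 ≠ 0 by linarith)]
    · rw [Set.uIcc_of_le (by norm_num)] at hs
      nlinarith [hs.1, hs.2]
  rw [IR, ← add_zero (∫ s in (-1 : ℝ)..1, reducedIntegrand n ℓ s), ← hboundary,
    ← intervalIntegral.integral_add
      (Continuous.intervalIntegrable (by unfold reducedIntegrand; fun_prop) _ _)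
      (Continuous.intervalIntegrable (by fun_prop) _ _)]
  exact intervalIntegral.integral_congr fun s _ => by simp only [reducedIntegrand]; ring

theorem abs_one_sub_sq_rpow_mul_sub_le {d ℓ s : ℝ} (hd : 4 ≤ d) (hℓ : 0 ≤ ℓ) (hs : s ^ 2 ≤ 1) :
    |(1 - s ^ 2) ^ ((d - 2) / 2) * (d / 2 + ℓ - (d + 1) * ℓ * s ^ 2) - ℓ|
      ≤ d / 2 + ((d - 2) / 2 * (d / 2 + ℓ) + (d + 1) * ℓ) * s ^ 2
        + (d - 2) / 2 * (d + 1) * ℓ * s ^ 4 := by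
  set R := (1 - s ^ 2) ^ ((d - 2) / 2)
  have hR : |R - 1| ≤ (d - 2) / 2 * s ^ 2 := by
    have hbern := one_add_mul_self_le_rpow_one_add (s := -s ^ 2) (by linarith)
      (p := (d - 2) / 2) (by linarith)
    have hR1 : R ≤ 1 := rpow_le_one (by linarith) (by linarith [sq_nonneg s]) (by linarith)
    rw [← sub_eq_add_neg] at hbern
    rw [abs_le]; constructor <;> linarith
  have hPpos : 0 ≤ (d + 1) * ℓ * s ^ 2 := by positivity
  have hP : |d / 2 + ℓ - (d + 1) * ℓ * s ^ 2| ≤ d / 2 + ℓ + (d + 1) * ℓ * s ^ 2 :=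
    abs_le.mpr ⟨by linarith, by linarith⟩
  have hPℓ : |d / 2 + ℓ - (d + 1) * ℓ * s ^ 2 - ℓ| ≤ d / 2 + (d + 1) * ℓ * s ^ 2 :=
    abs_le.mpr ⟨by linarith, by linarith⟩
  calc |R * (d / 2 + ℓ - (d + 1) * ℓ * s ^ 2) - ℓ|
      = |(R - 1) * (d / 2 + ℓ - (d + 1) * ℓ * s ^ 2) + (d / 2 + ℓ - (d + 1) * ℓ * s ^ 2 - ℓ)| := by
        ring_nf
    _ ≤ |R - 1| * |d / 2 + ℓ - (d + 1) * ℓ * s ^ 2| + |d / 2 + ℓ - (d + 1) * ℓ * s ^ 2 - ℓ| := by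
        rw [← abs_mul]; exact abs_add_le _ _
    _ ≤ (d - 2) / 2 * s ^ 2 * (d / 2 + ℓ + (d + 1) * ℓ * s ^ 2)
          + (d / 2 + (d + 1) * ℓ * s ^ 2) := by
        gcongr
        exact (abs_nonneg _).trans hR
    _ = _ := by ring

theorem abs_reducedIntegrand_sub_le {d ℓ s : ℝ} (hd : 4 ≤ d) (hℓ : 1 ≤ ℓ) (hs : s ^ 2 ≤ 1) :
    |reducedIntegrand d ℓ s - ℓ * exp (-(d - 2) * ℓ * s ^ 2)|
      ≤ 4 * (d + 1) * exp (-((d - 2) * ℓ / 2) * s ^ 2) := by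
  have ha : 0 < d - 2 := by linarith
  have hℓ0 : 0 < ℓ := by linarith
  have hcoef : d / 2 + 2 * ((d - 2) / 2 * (d / 2 + ℓ) + (d + 1) * ℓ) / ((d - 2) * ℓ)
      + 8 * ((d - 2) / 2 * (d + 1) * ℓ) / ((d - 2) * ℓ) ^ 2 ≤ 4 * (d + 1) := by
    have hsplit : d / 2 + 2 * ((d - 2) / 2 * (d / 2 + ℓ) + (d + 1) * ℓ) / ((d - 2) * ℓ)
        + 8 * ((d - 2) / 2 * (d + 1) * ℓ) / ((d - 2) * ℓ) ^ 2
        = d / 2 + 1 + d / 2 / ℓ + 2 * (d + 1) / (d - 2) + 4 * (d + 1) / (d - 2) / ℓ := by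
      field_simp
      ring
    have h₁ : d / 2 / ℓ ≤ d / 2 := div_le_self (by linarith) hℓ
    have h₂ : 2 * (d + 1) / (d - 2) ≤ d + 1 := by
      rw [div_le_iff₀ ha]; nlinarith
    have h₃ : 4 * (d + 1) / (d - 2) / ℓ ≤ 2 * (d + 1) := by
      refine (div_le_self (by positivity) hℓ).trans ?_
      rw [div_le_iff₀ ha]; nlinarith
    linarith
  calc _ = exp (-((d - 2) * ℓ) * s ^ 2) *
        |(1 - s ^ 2) ^ ((d - 2) / 2) * (d / 2 + ℓ - (d + 1) * ℓ * s ^ 2) - ℓ| := by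
        rw [← abs_of_pos (exp_pos (-((d - 2) * ℓ) * s ^ 2)), ← abs_mul, reducedIntegrand]
        ring_nf
    _ ≤ exp (-((d - 2) * ℓ) * s ^ 2) * (d / 2 + ((d - 2) / 2 * (d / 2 + ℓ) + (d + 1) * ℓ) * s ^ 2
        + (d - 2) / 2 * (d + 1) * ℓ * s ^ 4) := by
        gcongr
        exact abs_one_sub_sq_rpow_mul_sub_le hd hℓ0.le hs
    _ ≤ (d / 2 + 2 * ((d - 2) / 2 * (d / 2 + ℓ) + (d + 1) * ℓ) / ((d - 2) * ℓ)
        + 8 * ((d - 2) / 2 * (d + 1) * ℓ) / ((d - 2) * ℓ) ^ 2) *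
          exp (-((d - 2) * ℓ / 2) * s ^ 2) :=
        exp_neg_mul_sq_mul_le (by positivity) (by linarith) (by positivity) (by positivity) s
    _ ≤ 4 * (d + 1) * exp (-((d - 2) * ℓ / 2) * s ^ 2) := by gcongr

theorem rpow_neg_half_eq_inv_sqrt {x : ℝ} (hx : 0 ≤ x) : x ^ (-(1 : ℝ) / 2) = (√x)⁻¹ := by
  rw [neg_div, rpow_neg hx, sqrt_eq_rpow]

theorem abs_integral_reducedIntegrand_sub_mul_integral_le {d ℓ : ℝ} (hd : 4 ≤ d) (hℓ : 1 ≤ ℓ) :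
    |(∫ s in (-1 : ℝ)..1, reducedIntegrand d ℓ s) -
        ℓ * ∫ s in (-1 : ℝ)..1, exp (-((d - 2) * ℓ) * s ^ 2)|
      ≤ 4 * (d + 1) * √(π / ((d - 2) * ℓ / 2)) := by
  have hb : 0 < (d - 2) * ℓ := mul_pos (by linarith) (by linarith)
  have hR := continuous_one_sub_sq_rpow (p := (d - 2) / 2) (by linarith)
  have hexp : ∫ s in (-1 : ℝ)..1, exp (-((d - 2) * ℓ) * s ^ 2) =
      ∫ s in (-1 : ℝ)..1, exp (-(d - 2) * ℓ * s ^ 2) := by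
    simp only [neg_mul]
  rw [hexp, ← intervalIntegral.integral_const_mul, ← intervalIntegral.integral_sub
    (Continuous.intervalIntegrable (by unfold reducedIntegrand; fun_prop) _ _)
    (Continuous.intervalIntegrable (by fun_prop) _ _), ← Real.norm_eq_abs]
  refine (intervalIntegral.norm_integral_le_of_norm_le (by norm_num)
    (Eventually.of_forall fun s hs => abs_reducedIntegrand_sub_le hd hℓ ?_)
    (Continuous.intervalIntegrable (by fun_prop) _ _)).trans ?_
  · nlinarith [hs.1, hs.2]
  rw [intervalIntegral.integral_const_mul]
  exact mul_le_mul_of_nonneg_left (integral_exp_neg_mul_sq_le (half_pos hb)) (by positivity)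

theorem abs_integral_reducedIntegrand_sub_le {d ℓ : ℝ} (hd : 4 ≤ d) (hℓ : 1 ≤ ℓ) :
    |(∫ s in (-1 : ℝ)..1, reducedIntegrand d ℓ s) - √(π / (d - 2)) * ℓ ^ ((1 : ℝ) / 2)|
      ≤ (4 * d + 5) * √(2 * π / (d - 2)) * ℓ ^ (-(1 : ℝ) / 2) := by
  have ha : 0 < d - 2 := by linarith
  have hℓ0 : 0 < ℓ := by linarith
  set b := (d - 2) * ℓ with hb_def
  have hb : 0 < b := by positivity
  set J := ∫ s in (-1 : ℝ)..1, exp (-b * s ^ 2)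
  set G := √(π / (b / 2))
  have hgauss : |ℓ * J - ℓ * √(π / b)| ≤ G := by
    rw [← mul_sub, abs_mul, abs_of_pos hℓ0]
    calc ℓ * |J - √(π / b)| ≤ ℓ * (2 / b * G) := by
          gcongr; exact abs_integral_exp_neg_mul_sq_sub_le hb
      _ = 2 / (d - 2) * G := by rw [hb_def]; field_simp
      _ ≤ G := mul_le_of_le_one_left (sqrt_nonneg _) (by rw [div_le_one ha]; linarith)
  have hlead : ℓ * √(π / b) = √(π / (d - 2)) * ℓ ^ ((1 : ℝ) / 2) := by
    rw [← div_div, sqrt_div (by positivity), ← sqrt_eq_rpow, mul_div_assoc', mul_comm,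
      mul_div_assoc, div_sqrt]
  have herr : G = √(2 * π / (d - 2)) * ℓ ^ (-(1 : ℝ) / 2) := by
    rw [rpow_neg_half_eq_inv_sqrt hℓ0.le, ← div_eq_mul_inv, ← sqrt_div (by positivity)]
    show √(π / (b / 2)) = _
    congr 1
    rw [hb_def]
    field_simp
  calc _ ≤ |(∫ s in (-1 : ℝ)..1, reducedIntegrand d ℓ s) - ℓ * J| + |ℓ * J - ℓ * √(π / b)| := by
        rw [← hlead]; exact abs_sub_le _ _ _
    _ ≤ 4 * (d + 1) * G + G :=
        add_le_add (abs_integral_reducedIntegrand_sub_mul_integral_le hd hℓ) hgauss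
    _ = _ := by rw [herr]; ring

theorem tendsto_rpow_neg_half_mul_of_abs_sub_le {f : ℝ → ℝ} {L C ℓ₀ : ℝ}
    (h : ∀ ℓ ≥ ℓ₀, |f ℓ - L * ℓ ^ ((1 : ℝ) / 2)| ≤ C * ℓ ^ (-(1 : ℝ) / 2)) :
    Tendsto (fun ℓ => ℓ ^ (-(1 : ℝ) / 2) * f ℓ) atTop (𝓝 L) := by
  have hclose : ∀ᶠ ℓ in atTop, |ℓ ^ (-(1 : ℝ) / 2) * f ℓ - L| ≤ C * ℓ⁻¹ := by
    filter_upwards [eventually_ge_atTop ℓ₀, eventually_gt_atTop 0] with ℓ hℓ hpos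
    have hsqrt : 0 < √ℓ := sqrt_pos.2 hpos
    have hf := h ℓ hℓ
    rw [rpow_neg_half_eq_inv_sqrt hpos.le, ← sqrt_eq_rpow] at hf
    rw [rpow_neg_half_eq_inv_sqrt hpos.le]
    calc |(√ℓ)⁻¹ * f ℓ - L| = |(√ℓ)⁻¹ * (f ℓ - L * √ℓ)| := by congr 1; field_simp
      _ = (√ℓ)⁻¹ * |f ℓ - L * √ℓ| := by rw [abs_mul, abs_of_pos (inv_pos.2 hsqrt)]
      _ ≤ (√ℓ)⁻¹ * (C * (√ℓ)⁻¹) := by gcongr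
      _ = C * (√ℓ ^ 2)⁻¹ := by ring
      _ = C * ℓ⁻¹ := by rw [sq_sqrt hpos.le]
  rw [tendsto_iff_norm_sub_tendsto_zero]
  refine squeeze_zero' (Eventually.of_forall fun _ => norm_nonneg _) hclose ?_
  simpa using tendsto_inv_atTop_zero.const_mul C

/-- For `n ≥ 5`, there are `C > 0` and `ℓ₀ ≥ 1` such that for all `ℓ ≥ ℓ₀`,
`|I_R(ℓ) − √(π/(n−2)) ℓ^{1/2}| ≤ C ℓ^{−1/2}`; in particular
`ℓ^{−1/2} I_R(ℓ) → √(π/(n−2))` as `ℓ → ∞`, and `I_R(ℓ) > 0` for all large `ℓ`. -/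
theorem stmt11 (n : ℕ) (hn : 5 ≤ n) :
    (∃ C > (0 : ℝ), ∃ ℓ₀ ≥ (1 : ℝ), ∀ ℓ ≥ ℓ₀,
        |IR n ℓ - Real.sqrt (π / ((n : ℝ) - 2)) * ℓ ^ ((1 : ℝ) / 2)|
          ≤ C * ℓ ^ (-(1 : ℝ) / 2)) ∧
      Tendsto (fun ℓ : ℝ => ℓ ^ (-(1 : ℝ) / 2) * IR n ℓ) atTop
        (nhds (Real.sqrt (π / ((n : ℝ) - 2)))) ∧
      (∀ᶠ ℓ : ℝ in atTop, 0 < IR n ℓ) := by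
  have hd : (4 : ℝ) ≤ n := by exact_mod_cast (by omega : 4 ≤ n)
  have hbound : ∀ ℓ ≥ (1 : ℝ), |IR n ℓ - √(π / ((n : ℝ) - 2)) * ℓ ^ ((1 : ℝ) / 2)|
      ≤ (4 * n + 5) * √(2 * π / ((n : ℝ) - 2)) * ℓ ^ (-(1 : ℝ) / 2) := fun ℓ hℓ => by
    rw [IR_eq_integral_reducedIntegrand (by omega)]
    exact abs_integral_reducedIntegrand_sub_le hd hℓ
  have hlim := tendsto_rpow_neg_half_mul_of_abs_sub_le hbound
  have hC : 0 < (4 * n + 5) * √(2 * π / ((n : ℝ) - 2)) :=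
    mul_pos (by positivity) (sqrt_pos.2 (div_pos (by positivity) (by linarith)))
  refine ⟨⟨_, hC, 1, le_rfl, hbound⟩, hlim, ?_⟩
  have hL : 0 < √(π / ((n : ℝ) - 2)) := sqrt_pos.2 (div_pos pi_pos (by linarith))
  filter_upwards [hlim.eventually (eventually_gt_nhds hL), eventually_gt_atTop 0] with ℓ hpos hℓ
  exact pos_of_mul_pos_right hpos (rpow_nonneg hℓ.le _)
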